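/- Let A generate a C₀-semigroup with ‖T_A(t)‖ ≤ M e^{ωt}, and let C₁ ∈ GL_A(X) be such that the semigroup generated by A + C₁ is exponentially stable. Then there exists ε > 0 such that for every C₂ ∈ GL_A(X) with ‖C₁ − C₂‖_A < ε, the semigroup generated by A + C₂ is also exponentially stable. -/

import Mathlib

open Filter Topology

variable {X : Type*} [NormedAddCommGroup X] [NormedSpace ℂ X] [CompleteSpace X]

/-- `T` is a strongly continuous one-parameter semigroup on `[0,∞)`. -/
def IsC0Semigroup (T : ℝ → X →L[ℂ] X) : Prop :=
  T 0 = 1 ∧ (∀ s t : ℝ, 0 ≤ s → 0 ≤ t → T (s + t) = T s ∘L T t) ∧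
    ∀ x : X, ContinuousOn (fun t => T t x) (Set.Ici 0)

/-- The (possibly unbounded) operator `A` is the infinitesimal generator of the
C₀-semigroup `T`. -/
def IsGenerator (T : ℝ → X →L[ℂ] X) (A : X →ₗ.[ℂ] X) : Prop :=
  IsC0Semigroup T ∧
    (∀ x : A.domain,
      Tendsto (fun t : ℝ => (t : ℂ)⁻¹ • (T t x - (x : X))) (𝓝[>] 0) (𝓝 (A x))) ∧
    (∀ x : X,
      (∃ y, Tendsto (fun t : ℝ => (t : ℂ)⁻¹ • (T t x - x)) (𝓝[>] 0) (𝓝 y)) →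
        x ∈ A.domain)

/-- `R` is the resolvent `(μ - A)⁻¹` of the operator `A` at the point `μ`. -/
def IsResolventAt (A : X →ₗ.[ℂ] X) (μ : ℂ) (R : X →L[ℂ] X) : Prop :=
  (∀ x : X, ∃ hx : R x ∈ A.domain, μ • R x - A ⟨R x, hx⟩ = x) ∧
    ∀ y : A.domain, R (μ • (y : X) - A y) = (y : X)

/-- `μ` belongs to the resolvent set of `A`. -/
def InResolventSet (A : X →ₗ.[ℂ] X) (μ : ℂ) : Prop :=
  ∃ R : X →L[ℂ] X, IsResolventAt A μ R

/-- Exponential stability of a semigroup. -/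
def ExpStable (T : ℝ → X →L[ℂ] X) : Prop :=
  ∃ N α : ℝ, 0 < N ∧ 0 < α ∧ ∀ t : ℝ, 0 ≤ t → ‖T t‖ ≤ N * Real.exp (-α * t)

/-- Exponential dichotomy (hyperbolicity) of a semigroup: there is a bounded projection
`P` commuting with the semigroup, such that the semigroup decays exponentially on the
range of `P`, and is invertible on the kernel of `P` with exponentially decaying
inverses. -/
def HasExpDichotomy (T : ℝ → X →L[ℂ] X) : Prop :=
  ∃ (P : X →L[ℂ] X) (N α : ℝ), P ∘L P = P ∧ 0 < N ∧ 0 < α ∧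
    (∀ t : ℝ, 0 ≤ t → T t ∘L P = P ∘L T t) ∧
    (∀ t : ℝ, 0 ≤ t → ∀ x : X, P x = x → ‖T t x‖ ≤ N * Real.exp (-α * t) * ‖x‖) ∧
    (∀ t : ℝ, 0 ≤ t → ∃ S : X →L[ℂ] X,
      (∀ x : X, P x = 0 → P (S x) = 0 ∧ S (T t x) = x ∧ T t (S x) = x) ∧
      (∀ x : X, P x = 0 → ‖S x‖ ≤ N * Real.exp (-α * t) * ‖x‖))

/-! The resolvent condition makes `C₂ - C₁` a bounded operator on `D(A)`: applying
`(μ - ω) ‖(C₂ - C₁) R(μ, A)‖ ≤ M ‖C₁ - C₂‖_A` to `(μ - A) x` and letting `μ → ∞` gives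
`‖(C₂ - C₁) x‖ ≤ M ‖C₁ - C₂‖_A ‖x‖`. Differentiating `u ↦ T₁ (t - u) (T₂ u x)` (Duhamel) bounds
`‖T₂ t - T₁ t‖` by `t ‖C₂ - C₁‖` times the suprema of `‖T₁‖` and `‖T₂‖` on `[0, t]`, and for
`t ≤ t₀` with `t₀ ‖C₂ - C₁‖` small this bootstraps to `sup ‖T₂‖ ≤ 2 sup ‖T₁‖`. Choosing `t₀`
with `‖T₁ t₀‖ < 1/2`, a small enough perturbation keeps `‖T₂ t₀‖ < 1`, and a semigroup with
`‖T t₀‖ < 1` is exponentially stable. -/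

open Set MeasureTheory

omit [CompleteSpace X] in
theorem ofReal_inv_smul (t : ℝ) (v : X) : (t : ℂ)⁻¹ • v = t⁻¹ • v := by
  rw [← Complex.ofReal_inv, Complex.coe_smul]

theorem ContinuousLinearMap.opNorm_le_of_dense {𝕜 E F : Type*} [NontriviallyNormedField 𝕜]
    [NormedAddCommGroup E] [NormedSpace 𝕜 E] [NormedAddCommGroup F] [NormedSpace 𝕜 F]
    (f : E →L[𝕜] F) {D : Set E} (hD : Dense D) {c : ℝ} (hc : 0 ≤ c)
    (h : ∀ x ∈ D, ‖f x‖ ≤ c * ‖x‖) : ‖f‖ ≤ c := by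
  refine f.opNorm_le_bound hc fun x => ?_
  have hclosed : IsClosed {x | ‖f x‖ ≤ c * ‖x‖} :=
    isClosed_le f.continuous.norm (continuous_const.mul continuous_norm)
  exact closure_minimal h hclosed (hD.closure_eq ▸ mem_univ x)

omit [CompleteSpace X] in
theorem hasDerivWithinAt_clm_apply_of_tendsto_slope {L : ℝ → X →L[ℂ] X} {f : ℝ → X}
    {f' L' : X} {s : Set ℝ} {a : ℝ}
    (hL : Tendsto (fun u => L u (slope f a u)) (𝓝[s \ {a}] a) (𝓝 (L a f')))
    (hLa : HasDerivWithinAt (fun u => L u (f a)) L' s a) :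
    HasDerivWithinAt (fun u => L u (f u)) (L a f' + L') s a := by
  rw [hasDerivWithinAt_iff_tendsto_slope] at hLa ⊢
  refine (hL.add hLa).congr fun u => ?_
  simp only [slope_def_module, (L u).map_smul_of_tower, map_sub, ← smul_add, sub_add_sub_cancel]

namespace IsC0Semigroup

variable {T : ℝ → X →L[ℂ] X}

theorem exists_forall_norm_le (hT : IsC0Semigroup T) (b : ℝ) :
    ∃ C, ∀ s ∈ Icc 0 b, ‖T s‖ ≤ C := by
  have hpt : ∀ x, ∃ C, ∀ s : Icc (0 : ℝ) b, ‖T s x‖ ≤ C := fun x =>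
    let ⟨C, hC⟩ := isCompact_Icc.exists_bound_of_continuousOn
      ((hT.2.2 x).mono Icc_subset_Ici_self)
    ⟨C, fun s => hC s s.2⟩
  obtain ⟨C, hC⟩ := banach_steinhaus (g := fun s : Icc (0 : ℝ) b => T s) hpt
  exact ⟨C, fun s hs => hC ⟨s, hs⟩⟩

theorem tendsto_apply (hT : IsC0Semigroup T) {ι : Type*} {l : Filter ι} {u : ι → ℝ}
    {v : ι → X} {s : ℝ} {z : X} (hs : 0 ≤ s) (hu : Tendsto u l (𝓝[Ici 0] s))
    (hv : Tendsto v l (𝓝 z)) :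
    Tendsto (fun i => T (u i) (v i)) l (𝓝 (T s z)) := by
  obtain ⟨C, hC⟩ := hT.exists_forall_norm_le (s + 1)
  have hbdd : ∀ᶠ i in l, ‖T (u i)‖ ≤ C := by
    have : Icc 0 (s + 1) ∈ 𝓝[Ici 0] s := by
      rw [← Ici_inter_Iic]
      exact inter_mem_nhdsWithin _ (Iic_mem_nhds (by linarith))
    filter_upwards [hu this] with i hi using hC _ hi
  have hz : Tendsto (fun i => T (u i) z) l (𝓝 (T s z)) := (hT.2.2 z s hs).tendsto.comp hu
  have hvz : Tendsto (fun i => T (u i) (v i - z)) l (𝓝 0) := by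
    refine squeeze_zero_norm' ?_ (by simpa using (tendsto_sub_nhds_zero_iff.2 hv).norm.const_mul C)
    filter_upwards [hbdd] with i hi using (T (u i)).le_of_opNorm_le hi _
  simpa using hvz.add hz

omit [CompleteSpace X] in
theorem norm_nat_mul_add_le (hT : IsC0Semigroup T) {t₀ r : ℝ} (ht₀ : 0 ≤ t₀) (hr : 0 ≤ r) :
    ∀ n : ℕ, ‖T (n * t₀ + r)‖ ≤ ‖T t₀‖ ^ n * ‖T r‖
  | 0 => by simp
  | n + 1 => by
    rw [Nat.cast_succ, add_one_mul, add_right_comm, add_comm _ t₀, hT.2.1 _ _ ht₀ (by positivity),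
      pow_succ', mul_assoc]
    exact (ContinuousLinearMap.opNorm_comp_le _ _).trans
      (mul_le_mul_of_nonneg_left (norm_nat_mul_add_le hT ht₀ hr n) (norm_nonneg _))

omit [CompleteSpace X] in
theorem slope_apply_eq (hT : IsC0Semigroup T) (x : X) {s u : ℝ} (hs : 0 ≤ s) (hu : 0 ≤ u)
    (hus : u ≠ s) :
    slope (fun u => T u x) s u = T (min u s) (|u - s|⁻¹ • (T |u - s| x - x)) := by
  have hshift : ∀ a b : ℝ, 0 ≤ a → a < b → T a (T (b - a) x) = T b x := fun a b ha hab => by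
    rw [← ContinuousLinearMap.comp_apply, ← hT.2.1 _ _ ha (by linarith), add_sub_cancel]
  rw [slope_def_module, (T _).map_smul_of_tower, map_sub]
  rcases hus.lt_or_gt with h | h
  · rw [min_eq_left h.le, abs_of_neg (sub_neg.2 h), neg_sub, hshift u s hu h, ← neg_sub s u,
      inv_neg, neg_smul, ← smul_neg, neg_sub]
  · rw [min_eq_right h.le, abs_of_pos (sub_pos.2 h), hshift s u hs h]

omit [CompleteSpace X] in
theorem comp_comm (hT : IsC0Semigroup T) {s t : ℝ} (hs : 0 ≤ s) (ht : 0 ≤ t) :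
    T s ∘L T t = T t ∘L T s := by
  rw [← hT.2.1 _ _ hs ht, ← hT.2.1 _ _ ht hs, add_comm]

omit [CompleteSpace X] in
theorem intervalIntegrable_apply (hT : IsC0Semigroup T) (x : X) {a b : ℝ} (ha : 0 ≤ a)
    (hb : 0 ≤ b) : IntervalIntegrable (fun s => T s x) volume a b :=
  ((hT.2.2 x).mono fun _ hs => (le_min ha hb).trans hs.1).intervalIntegrable

theorem tendsto_slope_integral (hT : IsC0Semigroup T) (x : X) {a : ℝ} (ha : 0 ≤ a) :
    Tendsto (fun h : ℝ => h⁻¹ • ((∫ s in 0..a + h, T s x) - ∫ s in 0..a, T s x)) (𝓝[>] 0)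
      (𝓝 (T a x)) := by
  have hcont : ContinuousOn (fun s => T s x) (Ioi a) :=
    (hT.2.2 x).mono fun _ hs => ha.trans (le_of_lt hs)
  have hderiv : HasDerivWithinAt (fun b => ∫ s in 0..b, T s x) (T a x) (Ioi a) a :=
    (intervalIntegral.integral_hasDerivWithinAt_right (hT.intervalIntegrable_apply x le_rfl ha)
      (hcont.stronglyMeasurableAtFilter_nhdsWithin measurableSet_Ioi a)
      ((hT.2.2 x a ha).mono fun _ hs => ha.trans (le_of_lt hs))).mono Ioi_subset_Ici_self
  have hshift : Tendsto (fun h : ℝ => a + h) (𝓝[>] 0) (𝓝[>] a) := by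
    have hmaps : MapsTo (a + ·) (Ioi (0 : ℝ)) (Ioi a) := fun _ hh => lt_add_of_pos_right a hh
    simpa using (continuous_const_add a).continuousWithinAt.tendsto_nhdsWithin hmaps (x := 0)
  refine ((hasDerivWithinAt_iff_tendsto_slope' (lt_irrefl a)).1 hderiv |>.comp hshift).congr
    fun h => ?_
  simp [slope_def_module]

theorem apply_integral (hT : IsC0Semigroup T) (x : X) {h t : ℝ} (hh : 0 ≤ h) (ht : 0 ≤ t) :
    T h (∫ s in 0..t, T s x) = (∫ s in 0..t + h, T s x) - ∫ s in 0..h, T s x := by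
  have hshift := intervalIntegral.integral_comp_add_right (fun s => T s x) h (a := 0) (b := t)
  rw [zero_add] at hshift
  rw [← (T h).intervalIntegral_comp_comm (hT.intervalIntegrable_apply x le_rfl ht),
    intervalIntegral.integral_interval_sub_left
      (hT.intervalIntegrable_apply x le_rfl (by positivity))
      (hT.intervalIntegrable_apply x le_rfl hh), ← hshift]
  refine intervalIntegral.integral_congr fun s hs => ?_
  have hs0 : 0 ≤ s := (le_min le_rfl ht).trans hs.1
  simp only [← ContinuousLinearMap.comp_apply, ← hT.2.1 _ _ hh hs0, add_comm h s]

theorem expStable_of_norm_lt_one (hT : IsC0Semigroup T) {t₀ : ℝ} (ht₀ : 0 < t₀)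
    (h : ‖T t₀‖ < 1) : ExpStable T := by
  obtain ⟨C, hC⟩ := hT.exists_forall_norm_le t₀
  -- the `max` avoids the junk value `Real.log 0 = 0` when `T t₀ = 0`
  set p := max ‖T t₀‖ (1 / 2)
  have hp0 : 0 < p := lt_max_of_lt_right (by norm_num)
  have hlog : Real.log p < 0 := Real.log_neg hp0 (max_lt h (by norm_num))
  refine ⟨max C 1 / p, -Real.log p / t₀, by positivity, div_pos (neg_pos.2 hlog) ht₀,
    fun t ht => ?_⟩
  set n := ⌊t / t₀⌋₊
  have hn : t / t₀ - 1 ≤ n := by linarith [Nat.lt_floor_add_one (t / t₀)]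
  have hr : t - n * t₀ ∈ Icc 0 t₀ := by
    have h₁ := (le_div_iff₀ ht₀).1 (Nat.floor_le (div_nonneg ht ht₀.le))
    have h₂ := (div_lt_iff₀ ht₀).1 (Nat.lt_floor_add_one (t / t₀))
    constructor <;> nlinarith
  calc ‖T t‖ = ‖T (n * t₀ + (t - n * t₀))‖ := by rw [add_sub_cancel]
    _ ≤ ‖T t₀‖ ^ n * ‖T (t - n * t₀)‖ := hT.norm_nat_mul_add_le ht₀.le hr.1 n
    _ ≤ p ^ n * max C 1 := by
        gcongr
        exacts [le_max_left _ _, (hC _ hr).trans (le_max_left _ _)]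
    _ = max C 1 * Real.exp (n * Real.log p) := by rw [Real.exp_nat_mul, Real.exp_log hp0, mul_comm]
    _ ≤ max C 1 * Real.exp ((t / t₀ - 1) * Real.log p) :=
        mul_le_mul_of_nonneg_left (Real.exp_le_exp.2 (mul_le_mul_of_nonpos_right hn hlog.le))
          (by positivity)
    _ = max C 1 / p * Real.exp (-(-Real.log p / t₀) * t) := by
        rw [sub_mul, one_mul, Real.exp_sub, Real.exp_log hp0]
        ring_nf

end IsC0Semigroup

namespace ExpStable

variable {T : ℝ → X →L[ℂ] X}

omit [CompleteSpace X] in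
theorem exists_forall_norm_le (h : ExpStable T) : ∃ N, 1 ≤ N ∧ ∀ t, 0 ≤ t → ‖T t‖ ≤ N := by
  obtain ⟨N, α, hN0, hα, hN⟩ := h
  refine ⟨max N 1, le_max_right _ _, fun t ht => (hN t ht).trans ?_⟩
  exact (mul_le_of_le_one_right hN0.le (Real.exp_le_one_iff.2 (by nlinarith))).trans
    (le_max_left _ _)

omit [CompleteSpace X] in
theorem tendsto_norm_atTop (h : ExpStable T) : Tendsto (fun t => ‖T t‖) atTop (𝓝 0) := by
  obtain ⟨N, α, -, hα, hN⟩ := h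
  refine squeeze_zero' (Eventually.of_forall fun t => norm_nonneg _)
    ((eventually_ge_atTop 0).mono hN) ?_
  simpa using (Real.tendsto_exp_neg_atTop_nhds_zero.comp
    (tendsto_id.const_mul_atTop hα)).const_mul N

end ExpStable

namespace IsGenerator

variable {T T₁ T₂ : ℝ → X →L[ℂ] X} {G G₁ G₂ : X →ₗ.[ℂ] X}

omit [CompleteSpace X] in
theorem tendsto_smul_sub (hT : IsGenerator T G) (x : G.domain) :
    Tendsto (fun h : ℝ => h⁻¹ • (T h x - x)) (𝓝[>] 0) (𝓝 (G x)) := by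
  simpa only [ofReal_inv_smul] using hT.2.1 x

omit [CompleteSpace X] in
theorem mem_domain_of_tendsto (hT : IsGenerator T G) {x y : X}
    (h : Tendsto (fun h : ℝ => h⁻¹ • (T h x - x)) (𝓝[>] 0) (𝓝 y)) : x ∈ G.domain :=
  hT.2.2 x ⟨y, by simpa only [ofReal_inv_smul] using h⟩

omit [CompleteSpace X] in
theorem apply_mem_domain (hT : IsGenerator T G) (x : G.domain) {s : ℝ} (hs : 0 ≤ s) :
    ∃ h : T s x ∈ G.domain, G ⟨T s x, h⟩ = T s (G x) := by
  have hlim : Tendsto (fun h : ℝ => h⁻¹ • (T h (T s x) - T s x)) (𝓝[>] 0) (𝓝 (T s (G x))) := by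
    refine ((T s).continuous.tendsto _ |>.comp (hT.tendsto_smul_sub x)).congr' ?_
    filter_upwards [self_mem_nhdsWithin] with h (hh : 0 < h)
    simp only [Function.comp_apply, (T s).map_smul_of_tower, map_sub,
      ← ContinuousLinearMap.comp_apply, hT.1.comp_comm hs hh.le]
  have hmem := hT.mem_domain_of_tendsto hlim
  exact ⟨hmem, tendsto_nhds_unique (hT.tendsto_smul_sub ⟨_, hmem⟩) hlim⟩

theorem integral_mem_domain (hT : IsGenerator T G) (x : X) {t : ℝ} (ht : 0 ≤ t) :
    ∫ s in 0..t, T s x ∈ G.domain := by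
  refine hT.mem_domain_of_tendsto (y := T t x - x) ?_
  have hlim := (hT.1.tendsto_slope_integral x ht).sub (hT.1.tendsto_slope_integral x le_rfl)
  rw [hT.1.1, one_apply_eq_self] at hlim
  refine hlim.congr' ?_
  filter_upwards [self_mem_nhdsWithin] with h (hh : 0 < h)
  rw [hT.1.apply_integral x hh.le ht, ← smul_sub, zero_add, intervalIntegral.integral_same,
    sub_zero, sub_right_comm]

theorem dense_domain (hT : IsGenerator T G) : Dense (G.domain : Set X) := by
  intro x
  have hlim := hT.1.tendsto_slope_integral x le_rfl
  simp only [zero_add, intervalIntegral.integral_same, sub_zero, hT.1.1,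
    one_apply_eq_self] at hlim
  refine mem_closure_of_tendsto hlim (eventually_mem_nhdsWithin.mono fun h hh => ?_)
  exact G.domain.smul_of_tower_mem _ (hT.integral_mem_domain x (le_of_lt hh))

theorem hasDerivWithinAt_apply (hT : IsGenerator T G) (x : G.domain) {s : ℝ} (hs : 0 ≤ s) :
    HasDerivWithinAt (fun u => T u x) (T s (G x)) (Ici 0) s := by
  rw [hasDerivWithinAt_iff_tendsto_slope]
  have hmin : Tendsto (fun u => min u s) (𝓝[Ici 0 \ {s}] s) (𝓝[Ici 0] s) :=
    tendsto_nhdsWithin_iff.2 ⟨((continuous_id.min continuous_const).tendsto' s s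
      (min_self s)).mono_left nhdsWithin_le_nhds,
      eventually_mem_nhdsWithin.mono fun u hu => le_min hu.1 hs⟩
  have habs : Tendsto (fun u => |u - s|) (𝓝[Ici 0 \ {s}] s) (𝓝[>] 0) :=
    tendsto_nhdsWithin_iff.2 ⟨((continuous_id.sub continuous_const).abs.tendsto' s 0
      (by simp)).mono_left nhdsWithin_le_nhds,
      eventually_mem_nhdsWithin.mono fun u hu => abs_pos.2 (sub_ne_zero.2 hu.2)⟩
  refine (hT.1.tendsto_apply hs hmin ((hT.tendsto_smul_sub x).comp habs)).congr' ?_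
  filter_upwards [self_mem_nhdsWithin] with u hu
  exact (hT.1.slope_apply_eq x hs hu.1 hu.2).symm

theorem hasDerivWithinAt_duhamel (h₁ : IsGenerator T₁ G₁) (h₂ : IsGenerator T₂ G₂)
    (x : G₂.domain) {s t : ℝ} (hs : s ∈ Icc 0 t) (m₁ : T₂ s x ∈ G₁.domain)
    (m₂ : T₂ s x ∈ G₂.domain) :
    HasDerivWithinAt (fun u => T₁ (t - u) (T₂ u x))
      (T₁ (t - s) (G₂ ⟨T₂ s x, m₂⟩ - G₁ ⟨T₂ s x, m₁⟩)) (Icc 0 t) s := by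
  have hts : 0 ≤ t - s := sub_nonneg.2 hs.2
  have hmaps : MapsTo (t - ·) (Icc 0 t) (Ici 0) := fun u hu => sub_nonneg.2 hu.2
  have hL : Tendsto (fun u => T₁ (t - u) (slope (fun u => T₂ u x) s u)) (𝓝[Icc 0 t \ {s}] s)
      (𝓝 (T₁ (t - s) (T₂ s (G₂ x)))) :=
    h₁.1.tendsto_apply hts
      ((continuous_const.sub continuous_id).continuousWithinAt.tendsto_nhdsWithin
        (hmaps.mono_left sdiff_subset))
      (hasDerivWithinAt_iff_tendsto_slope.1
        ((h₂.hasDerivWithinAt_apply x hs.1).mono Icc_subset_Ici_self))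
  have hLa : HasDerivWithinAt (fun u => T₁ (t - u) (T₂ s x)) (-T₁ (t - s) (G₁ ⟨_, m₁⟩))
      (Icc 0 t) s := by
    simpa [Function.comp_def] using (h₁.hasDerivWithinAt_apply ⟨_, m₁⟩ hts).scomp s
      ((hasDerivAt_id s).const_sub t).hasDerivWithinAt hmaps
  have hcomm : G₂ ⟨T₂ s x, m₂⟩ = T₂ s (G₂ x) := (h₂.apply_mem_domain x hs.1).2
  convert hasDerivWithinAt_clm_apply_of_tendsto_slope hL hLa using 1
  rw [map_sub, hcomm, sub_eq_add_neg]

theorem norm_sub_le_of_perturbation (h₁ : IsGenerator T₁ G₁) (h₂ : IsGenerator T₂ G₂)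
    (hdom : G₂.domain ≤ G₁.domain) {K N₁ N₂ t : ℝ} (hK0 : 0 ≤ K)
    (hK : ∀ x : G₂.domain, ‖G₂ x - G₁ ⟨x, hdom x.2⟩‖ ≤ K * ‖(x : X)‖) (ht : 0 ≤ t)
    (hN₁ : ∀ u ∈ Icc 0 t, ‖T₁ u‖ ≤ N₁) (hN₂ : ∀ u ∈ Icc 0 t, ‖T₂ u‖ ≤ N₂) :
    ‖T₂ t - T₁ t‖ ≤ N₁ * K * N₂ * t := by
  have hN₁0 : 0 ≤ N₁ := (norm_nonneg _).trans (hN₁ 0 ⟨le_rfl, ht⟩)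
  have hN₂0 : 0 ≤ N₂ := (norm_nonneg _).trans (hN₂ 0 ⟨le_rfl, ht⟩)
  refine (T₂ t - T₁ t).opNorm_le_of_dense h₂.dense_domain (by positivity) fun x hx => ?_
  have hderiv : ∀ u ∈ Icc 0 t, ∃ d, HasDerivWithinAt (fun u => T₁ (t - u) (T₂ u x)) d (Icc 0 t) u
      ∧ ‖d‖ ≤ N₁ * K * N₂ * ‖x‖ := by
    intro u hu
    obtain ⟨m₂, -⟩ := h₂.apply_mem_domain ⟨x, hx⟩ hu.1
    refine ⟨_, h₁.hasDerivWithinAt_duhamel h₂ ⟨x, hx⟩ hu (hdom m₂) m₂, ?_⟩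
    calc _ ≤ N₁ * ‖G₂ ⟨T₂ u x, m₂⟩ - G₁ ⟨T₂ u x, hdom m₂⟩‖ :=
          (T₁ _).le_of_opNorm_le (hN₁ _ ⟨sub_nonneg.2 hu.2, by linarith [hu.1]⟩) _
      _ ≤ N₁ * (K * (N₂ * ‖x‖)) := by
          gcongr
          exact (hK ⟨_, m₂⟩).trans (by gcongr; exact (T₂ u).le_of_opNorm_le (hN₂ u hu) x)
      _ = N₁ * K * N₂ * ‖x‖ := by ring
  choose! d hd hbound using hderiv
  have hmvt := (convex_Icc 0 t).norm_image_sub_le_of_norm_hasDerivWithin_le hd hbound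
    ⟨le_rfl, ht⟩ ⟨ht, le_rfl⟩
  simpa [h₁.1.1, h₂.1.1, abs_of_nonneg ht, mul_right_comm _ t] using hmvt

theorem norm_sub_le_of_small_perturbation (h₁ : IsGenerator T₁ G₁) (h₂ : IsGenerator T₂ G₂)
    (hdom : G₂.domain ≤ G₁.domain) {K N t₀ : ℝ} (hK0 : 0 ≤ K)
    (hK : ∀ x : G₂.domain, ‖G₂ x - G₁ ⟨x, hdom x.2⟩‖ ≤ K * ‖(x : X)‖)
    (hN : ∀ u ∈ Icc 0 t₀, ‖T₁ u‖ ≤ N) (hsmall : 2 * N * K * t₀ ≤ 1) {t : ℝ}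
    (ht : t ∈ Icc 0 t₀) :
    ‖T₂ t - T₁ t‖ ≤ 2 * N ^ 2 * K * t := by
  have ht₀ : 0 ≤ t₀ := ht.1.trans ht.2
  have hN0 : 0 ≤ N := (norm_nonneg _).trans (hN 0 ⟨le_rfl, ht₀⟩)
  obtain ⟨C, hC⟩ := h₂.1.exists_forall_norm_le t₀
  set S := sSup ((fun u => ‖T₂ u‖) '' Icc 0 t₀)
  have hbdd : BddAbove ((fun u => ‖T₂ u‖) '' Icc 0 t₀) := ⟨C, forall_mem_image.2 hC⟩
  have hle_S : ∀ u ∈ Icc 0 t₀, ‖T₂ u‖ ≤ S := fun u hu => le_csSup hbdd (mem_image_of_mem _ hu)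
  have hS0 : 0 ≤ S := (norm_nonneg _).trans (hle_S 0 ⟨le_rfl, ht₀⟩)
  have hS : S ≤ 2 * N := by
    -- with `2 N K t₀ ≤ 1` this reads `S ≤ N + S / 2`
    suffices S ≤ N + N * K * S * t₀ by nlinarith
    refine csSup_le ((nonempty_Icc.2 ht₀).image _) (forall_mem_image.2 fun u hu => ?_)
    have hdiff := h₁.norm_sub_le_of_perturbation h₂ hdom hK0 hK hu.1
      (fun v hv => hN v ⟨hv.1, hv.2.trans hu.2⟩) (fun v hv => hle_S v ⟨hv.1, hv.2.trans hu.2⟩)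
    calc ‖T₂ u‖ ≤ ‖T₁ u‖ + ‖T₂ u - T₁ u‖ := norm_le_insert' _ _
      _ ≤ N + N * K * S * t₀ := by
          gcongr
          · exact hN u hu
          · exact hdiff.trans (by gcongr; exact hu.2)
  calc ‖T₂ t - T₁ t‖ ≤ N * K * (2 * N) * t := h₁.norm_sub_le_of_perturbation h₂ hdom hK0 hK ht.1
        (fun v hv => hN v ⟨hv.1, hv.2.trans ht.2⟩)
        (fun v hv => (hle_S v ⟨hv.1, hv.2.trans ht.2⟩).trans hS)
    _ = 2 * N ^ 2 * K * t := by ring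

end IsGenerator

omit [CompleteSpace X] in
theorem norm_apply_le_of_resolvent_bound {A C : X →ₗ.[ℂ] X} (hdom : A.domain ≤ C.domain)
    {ω K : ℝ} {R CR : ℝ → X →L[ℂ] X} (hR : ∀ μ : ℝ, ω < μ → IsResolventAt A μ (R μ))
    (hCR : ∀ μ : ℝ, ω < μ → ∀ x (hx : R μ x ∈ C.domain), CR μ x = C ⟨R μ x, hx⟩)
    (hK : ∀ μ : ℝ, ω < μ → (μ - ω) * ‖CR μ‖ ≤ K) (x : A.domain) :
    ‖C ⟨x, hdom x.2⟩‖ ≤ K * ‖(x : X)‖ := by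
  have hK0 : 0 ≤ K :=
    (mul_nonneg (by linarith) (norm_nonneg _)).trans (hK (ω + 1) (by linarith))
  set c := K * (ω * ‖(x : X)‖ + ‖A x‖)
  have hbound : ∀ μ, max ω 0 < μ → ‖C ⟨x, hdom x.2⟩‖ ≤ K * ‖(x : X)‖ + c / (μ - ω) := by
    intro μ hμ
    have hμω : ω < μ := (le_max_left _ _).trans_lt hμ
    have hμ0 : 0 < μ := (le_max_right _ _).trans_lt hμ
    have hRx : R μ ((μ : ℂ) • (x : X) - A x) = x := (hR μ hμω).2 x
    have hCx : C ⟨x, hdom x.2⟩ = CR μ ((μ : ℂ) • (x : X) - A x) := by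
      rw [hCR μ hμω _ (by rw [hRx]; exact hdom x.2)]
      exact congrArg C (Subtype.ext hRx.symm)
    have hCR_le : ‖CR μ‖ ≤ K / (μ - ω) := by
      rw [le_div_iff₀ (sub_pos.2 hμω), mul_comm]
      exact hK μ hμω
    calc ‖C ⟨x, hdom x.2⟩‖ ≤ ‖CR μ‖ * ‖(μ : ℂ) • (x : X) - A x‖ := hCx ▸ (CR μ).le_opNorm _
      _ ≤ K / (μ - ω) * (μ * ‖(x : X)‖ + ‖A x‖) := by
          gcongr
          refine (norm_sub_le _ _).trans_eq ?_
          rw [norm_smul, Complex.norm_real, Real.norm_of_nonneg hμ0.le]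
      _ = K * ‖(x : X)‖ + c / (μ - ω) := by
          field_simp [(sub_pos.2 hμω).ne']
          ring
  have hlim : Tendsto (fun μ => K * ‖(x : X)‖ + c / (μ - ω)) atTop (𝓝 (K * ‖(x : X)‖ + 0)) :=
    tendsto_const_nhds.add (tendsto_const_nhds.div_atTop
      (tendsto_atTop_add_const_right _ _ tendsto_id))
  rw [add_zero] at hlim
  exact ge_of_tendsto hlim ((eventually_gt_atTop _).mono hbound)

omit [CompleteSpace X] in
theorem norm_add_sub_add_le_of_resolvent_bound {A C₁ C₂ : X →ₗ.[ℂ] X}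
    (hdom1 : C₁.domain = A.domain) (hdom2 : C₂.domain = A.domain) {ω K : ℝ}
    {R CR₁ CR₂ : ℝ → X →L[ℂ] X} (hR : ∀ μ : ℝ, ω < μ → IsResolventAt A μ (R μ))
    (hCR₁ : ∀ μ : ℝ, ω < μ → ∀ x (hx : R μ x ∈ C₁.domain), CR₁ μ x = C₁ ⟨R μ x, hx⟩)
    (hCR₂ : ∀ μ : ℝ, ω < μ → ∀ x (hx : R μ x ∈ C₂.domain), CR₂ μ x = C₂ ⟨R μ x, hx⟩)
    (hK : ∀ μ : ℝ, ω < μ → (μ - ω) * ‖CR₂ μ - CR₁ μ‖ ≤ K) (x : (A + C₂).domain) :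
    ‖(A + C₂) x - (A + C₁) ⟨x, x.2.1, hdom1 ▸ x.2.1⟩‖ ≤ K * ‖(x : X)‖ := by
  have hdom : A.domain ≤ (C₂ - C₁).domain := fun y hy => ⟨hdom2 ▸ hy, hdom1 ▸ hy⟩
  have hCR : ∀ μ : ℝ, ω < μ → ∀ y (hy : R μ y ∈ (C₂ - C₁).domain),
      (CR₂ μ - CR₁ μ) y = (C₂ - C₁) ⟨R μ y, hy⟩ := fun μ hμ y hy => by
    show CR₂ μ y - CR₁ μ y = _
    rw [hCR₂ μ hμ y hy.1, hCR₁ μ hμ y hy.2]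
    rfl
  convert norm_apply_le_of_resolvent_bound hdom hR hCR hK ⟨x, x.2.1⟩ using 2
  simp only [LinearPMap.add_apply, LinearPMap.sub_apply]
  abel

omit [CompleteSpace X] in
theorem bddAbove_weighted_norm_sub {ω : ℝ} {F G : ℝ → X →L[ℂ] X}
    (hF : BddAbove {r : ℝ | ∃ μ : ℝ, ω < μ ∧ r = (μ - ω) * ‖F μ‖})
    (hG : BddAbove {r : ℝ | ∃ μ : ℝ, ω < μ ∧ r = (μ - ω) * ‖G μ‖}) :
    BddAbove {r : ℝ | ∃ μ : ℝ, ω < μ ∧ r = (μ - ω) * ‖F μ - G μ‖} := by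
  obtain ⟨B, hB⟩ := hF
  obtain ⟨B', hB'⟩ := hG
  refine ⟨B + B', ?_⟩
  rintro _ ⟨μ, hμ, rfl⟩
  calc (μ - ω) * ‖F μ - G μ‖ ≤ (μ - ω) * ‖F μ‖ + (μ - ω) * ‖G μ‖ := by
        rw [← mul_add]
        exact mul_le_mul_of_nonneg_left (norm_sub_le _ _) (sub_pos.2 hμ).le
    _ ≤ B + B' := add_le_add (hB ⟨μ, hμ, rfl⟩) (hB' ⟨μ, hμ, rfl⟩)

theorem exp_stability_persists_general
    {X : Type*} [NormedAddCommGroup X] [NormedSpace ℂ X] [CompleteSpace X]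
    (A C₁ : X →ₗ.[ℂ] X) (T₁ : ℝ → X →L[ℂ] X) (M ω : ℝ)
    (hM : 1 ≤ M)
    (hdom1 : C₁.domain = A.domain)
    (Rres : ℝ → X →L[ℂ] X)
    (hRres : ∀ μ : ℝ, ω < μ → IsResolventAt A (μ : ℂ) (Rres μ))
    (CR₁ : ℝ → X →L[ℂ] X)
    (hCR₁ : ∀ μ : ℝ, ω < μ → ∀ x : X, ∀ hx : Rres μ x ∈ C₁.domain,
      CR₁ μ x = C₁ ⟨Rres μ x, hx⟩)
    (hb₁ : BddAbove {r : ℝ | ∃ μ : ℝ, ω < μ ∧ r = (μ - ω) * ‖CR₁ μ‖})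
    (hgen₁ : IsGenerator T₁ (A + C₁))
    (hstab : ExpStable T₁) :
    ∃ ε : ℝ, 0 < ε ∧ ∀ C₂ : X →ₗ.[ℂ] X, C₂.domain = A.domain →
      ∀ CR₂ : ℝ → X →L[ℂ] X,
        (∀ μ : ℝ, ω < μ → ∀ x : X, ∀ hx : Rres μ x ∈ C₂.domain,
          CR₂ μ x = C₂ ⟨Rres μ x, hx⟩) →
        BddAbove {r : ℝ | ∃ μ : ℝ, ω < μ ∧ r = (μ - ω) * ‖CR₂ μ‖} →
        (1 / M) * sSup {r : ℝ | ∃ μ : ℝ, ω < μ ∧ r = (μ - ω) * ‖CR₁ μ - CR₂ μ‖} < ε →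
        ∀ T₂ : ℝ → X →L[ℂ] X, IsGenerator T₂ (A + C₂) → ExpStable T₂ := by
  obtain ⟨N, hN1, hN⟩ := hstab.exists_forall_norm_le
  obtain ⟨t₀, hT₁t₀, ht₀⟩ := ((hstab.tendsto_norm_atTop.eventually
    (gt_mem_nhds (by norm_num : (0 : ℝ) < 1 / 2))).and (eventually_gt_atTop 0)).exists
  set K := 1 / (4 * N ^ 2 * t₀) with hK
  refine ⟨K / M, by positivity, fun C₂ hdom2 CR₂ hCR₂ hb₂ hε T₂ hgen₂ => ?_⟩
  have hsup : sSup {r : ℝ | ∃ μ : ℝ, ω < μ ∧ r = (μ - ω) * ‖CR₁ μ - CR₂ μ‖} < K := by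
    rw [div_eq_mul_one_div K M, mul_comm K] at hε
    exact lt_of_mul_lt_mul_left hε (by positivity)
  have hCR : ∀ μ : ℝ, ω < μ → (μ - ω) * ‖CR₂ μ - CR₁ μ‖ ≤ K := fun μ hμ =>
    (le_csSup (bddAbove_weighted_norm_sub hb₁ hb₂) ⟨μ, hμ, by rw [norm_sub_rev]⟩).trans hsup.le
  have hsmall : 2 * N * K * t₀ ≤ 1 := by
    rw [show 2 * N * K * t₀ = 1 / (2 * N) by rw [hK]; field_simp; ring, div_le_one (by positivity)]
    linarith
  have hhalf : 2 * N ^ 2 * K * t₀ = 1 / 2 := by rw [hK]; field_simp; ring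
  have hT₂T₁ := hgen₁.norm_sub_le_of_small_perturbation hgen₂ (fun x hx => ⟨hx.1, hdom1 ▸ hx.1⟩)
    (by positivity) (norm_add_sub_add_le_of_resolvent_bound hdom1 hdom2 hRres hCR₁ hCR₂ hCR)
    (fun u hu => hN u hu.1) hsmall ⟨ht₀.le, le_rfl⟩
  refine hgen₂.1.expStable_of_norm_lt_one ht₀ ?_
  calc ‖T₂ t₀‖ ≤ ‖T₁ t₀‖ + ‖T₂ t₀ - T₁ t₀‖ := norm_le_insert' _ _
    _ < 1 := by linarith

/-- Persistence of exponential stability: if `A + C₁` generates an exponentially stable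
semigroup, then so does `A + C₂` whenever `‖C₁ - C₂‖_A` is sufficiently small. -/
theorem exp_stability_persists
    {X : Type*} [NormedAddCommGroup X] [NormedSpace ℂ X] [CompleteSpace X]
    (A C₁ : X →ₗ.[ℂ] X) (T T₁ : ℝ → X →L[ℂ] X) (M ω : ℝ)
    (hM : 1 ≤ M)
    (hgen : IsGenerator T A)
    (hbound : ∀ t : ℝ, 0 ≤ t → ‖T t‖ ≤ M * Real.exp (ω * t))
    (hdom1 : C₁.domain = A.domain)
    (Rres : ℝ → X →L[ℂ] X)
    (hRres : ∀ μ : ℝ, ω < μ → IsResolventAt A (μ : ℂ) (Rres μ))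
    (CR₁ : ℝ → X →L[ℂ] X)
    (hCR₁ : ∀ μ : ℝ, ω < μ → ∀ x : X, ∀ hx : Rres μ x ∈ C₁.domain,
      CR₁ μ x = C₁ ⟨Rres μ x, hx⟩)
    (hb₁ : BddAbove {r : ℝ | ∃ μ : ℝ, ω < μ ∧ r = (μ - ω) * ‖CR₁ μ‖})
    (hgen₁ : IsGenerator T₁ (A + C₁))
    (hstab : ExpStable T₁) :
    ∃ ε : ℝ, 0 < ε ∧ ∀ C₂ : X →ₗ.[ℂ] X, C₂.domain = A.domain →
      ∀ CR₂ : ℝ → X →L[ℂ] X,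
        (∀ μ : ℝ, ω < μ → ∀ x : X, ∀ hx : Rres μ x ∈ C₂.domain,
          CR₂ μ x = C₂ ⟨Rres μ x, hx⟩) →
        BddAbove {r : ℝ | ∃ μ : ℝ, ω < μ ∧ r = (μ - ω) * ‖CR₂ μ‖} →
        (1 / M) * sSup {r : ℝ | ∃ μ : ℝ, ω < μ ∧ r = (μ - ω) * ‖CR₁ μ - CR₂ μ‖} < ε →
        ∀ T₂ : ℝ → X →L[ℂ] X, IsGenerator T₂ (A + C₂) → ExpStable T₂ :=
  exp_stability_persists_general A C₁ T₁ M ω hM hdom1 Rres hRres CR₁ hCR₁ hb₁ hgen₁ hstab
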